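/- arXiv:math/0601145 — 5 statements merged into one kernel-verified Lean document; each statement's English description precedes it below -/
import Mathlib

section
/- Let B be a finite biquandle. Then for every a ∈ B there is exactly one x ∈ B with a^x = x, exactly one x ∈ B with a^{x̄} = x, exactly one x ∈ B with a_x = x, and exactly one x ∈ B with a_{x̄} = x. (Equivalently, every row of each of the four submatrices of the matrix of B has exactly one entry equal to its column number.) -/
/-- A set with four binary operations: `ur a b = a^b` (upper right),
`ul a b = a^{b̄}` (upper left), `lr a b = a_b` (lower right),
`ll a b = a_{b̄}` (lower left). -/
structure BiquandleOps (B : Type*) where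
  ur : B → B → B
  ul : B → B → B
  lr : B → B → B
  ll : B → B → B

/-- The Kauffman–Radford biquandle axioms (1)–(4). -/
def IsBiquandle {B : Type*} (Q : BiquandleOps B) : Prop :=
  -- axiom (1)
  (∀ a b, Q.ul (Q.ur a b) (Q.lr b a) = a) ∧
  (∀ a b, Q.ll (Q.lr b a) (Q.ur a b) = b) ∧
  (∀ a b, Q.ur (Q.ul a b) (Q.ll b a) = a) ∧
  (∀ a b, Q.lr (Q.ll b a) (Q.ul a b) = b) ∧
  -- axiom (2)
  (∀ a b, ∃ x, x = Q.ur a (Q.ll b x) ∧ a = Q.ul x b ∧ b = Q.lr (Q.ll b x) a) ∧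
  (∀ a b, ∃ y, y = Q.ul a (Q.lr b y) ∧ a = Q.ur y b ∧ b = Q.ll (Q.lr b y) a) ∧
  -- axiom (3)
  (∀ a b c, Q.ur (Q.ur a b) c = Q.ur (Q.ur a (Q.lr c b)) (Q.ur b c)) ∧
  (∀ a b c, Q.lr (Q.lr c b) a = Q.lr (Q.lr c (Q.ur a b)) (Q.lr b a)) ∧
  (∀ a b c, Q.ur (Q.lr b a) (Q.lr c (Q.ur a b)) = Q.lr (Q.ur b c) (Q.ur a (Q.lr c b))) ∧
  (∀ a b c, Q.ul (Q.ul a b) c = Q.ul (Q.ul a (Q.ll c b)) (Q.ul b c)) ∧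
  (∀ a b c, Q.ll (Q.ll c b) a = Q.ll (Q.ll c (Q.ul a b)) (Q.ll b a)) ∧
  (∀ a b c, Q.ul (Q.ll b a) (Q.ll c (Q.ul a b)) = Q.ll (Q.ul b c) (Q.ul a (Q.ll c b))) ∧
  -- axiom (4)
  (∀ a, ∃ x, x = Q.lr a x ∧ a = Q.ur x a) ∧
  (∀ a, ∃ y, y = Q.ul a y ∧ a = Q.ll y a)

/-- The obverse: interchange right and left operations. -/
def Obv {B : Type*} (Q : BiquandleOps B) : BiquandleOps B :=
  ⟨Q.ul, Q.ur, Q.ll, Q.lr⟩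

/-- The flip: interchange upper and lower operations. -/
def Flip {B : Type*} (Q : BiquandleOps B) : BiquandleOps B :=
  ⟨Q.lr, Q.ll, Q.ur, Q.ul⟩

/-- A biquandle homomorphism: a map preserving all four operations. -/
def IsBiquandleHom {B T : Type*} (Q : BiquandleOps B) (R : BiquandleOps T)
    (φ : B → T) : Prop :=
  (∀ a b, φ (Q.ur a b) = R.ur (φ a) (φ b)) ∧
  (∀ a b, φ (Q.ul a b) = R.ul (φ a) (φ b)) ∧
  (∀ a b, φ (Q.lr a b) = R.lr (φ a) (φ b)) ∧
  (∀ a b, φ (Q.ll a b) = R.ll (φ a) (φ b))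

/-!
In a finite biquandle every column map `y ↦ y^c` is a bijection (axiom (2) and finiteness), so
there is a unique `g c` with `(g c)^c = c`, and `a^x = x` holds iff `g x = a`: the claim for the
upper right operation says that `g` is a bijection. Axioms (1) and (4) show that `y^c = c` forces
`c_y = y`, so the analogous function for the lower right operation is a left inverse of `g`, and by
finiteness both are bijections. The left operations are paired in the same way.
-/

open Function

section ColumnFixedPoints

variable {B : Type*} {op op' : B → B → B}

theorem existsUnique_op_eq_self_of_bijective (hop : ∀ c, Injective (op · c)) {g : B → B}
    (hg : ∀ c, op (g c) c = c) (hbij : Bijective g) (a : B) : ∃! x, op a x = x :=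
  (existsUnique_congr fun x => ⟨fun h => hop x ((hg x).trans h.symm), fun h => h ▸ hg x⟩).mpr
    (hbij.existsUnique a)

theorem existsUnique_op_eq_self_of_imp [Finite B] (h : ∀ c, Surjective (op · c))
    (h' : ∀ c, Surjective (op' · c)) (himp : ∀ y c, op y c = c → op' c y = y) (a : B) :
    (∃! x, op a x = x) ∧ (∃! x, op' a x = x) := by
  have inj : ∀ c, Injective (op · c) := fun c => Finite.injective_iff_surjective.mpr (h c)
  have inj' : ∀ c, Injective (op' · c) := fun c => Finite.injective_iff_surjective.mpr (h' c)
  choose g hg using fun c => (h c c : ∃ y, op y c = c)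
  choose g' hg' using fun c => (h' c c : ∃ y, op' y c = c)
  have hinv : LeftInverse g' g := fun c => inj' (g c) ((hg' (g c)).trans (himp _ _ (hg c)).symm)
  exact ⟨existsUnique_op_eq_self_of_bijective inj hg
      (Finite.injective_iff_bijective.mp hinv.injective) a,
    existsUnique_op_eq_self_of_bijective inj' hg'
      (Finite.surjective_iff_bijective.mp hinv.surjective) a⟩

end ColumnFixedPoints

namespace IsBiquandle

variable {B : Type*} {Q : BiquandleOps B}

theorem ur_right_surjective (hQ : IsBiquandle Q) (b : B) : Surjective (Q.ur · b) := by
  obtain ⟨-, -, -, -, -, h2b, -⟩ := hQ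
  intro a
  obtain ⟨y, -, hy, -⟩ := h2b a b
  exact ⟨y, hy.symm⟩

theorem ul_right_surjective (hQ : IsBiquandle Q) (b : B) : Surjective (Q.ul · b) := by
  obtain ⟨-, -, -, -, h2a, -⟩ := hQ
  intro a
  obtain ⟨x, -, hx, -⟩ := h2a a b
  exact ⟨x, hx.symm⟩

theorem lr_right_surjective (hQ : IsBiquandle Q) (a : B) : Surjective (Q.lr · a) := by
  obtain ⟨-, -, -, -, h2a, -⟩ := hQ
  intro b
  obtain ⟨x, -, -, hb⟩ := h2a a b
  exact ⟨Q.ll b x, hb.symm⟩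

theorem ll_right_surjective (hQ : IsBiquandle Q) (a : B) : Surjective (Q.ll · a) := by
  obtain ⟨-, -, -, -, -, h2b, -⟩ := hQ
  intro b
  obtain ⟨y, -, -, hb⟩ := h2b a b
  exact ⟨Q.lr b y, hb.symm⟩

variable [Finite B]

theorem lr_eq_of_ur_eq (hQ : IsBiquandle Q) {y c : B} (h : Q.ur y c = c) : Q.lr c y = y := by
  have hinj := Finite.injective_iff_surjective.mpr (hQ.ll_right_surjective c)
  obtain ⟨h1a, h1b, -, -, -, -, -, -, -, -, -, -, -, h4b⟩ := hQ
  have hul : Q.ul c (Q.lr c y) = y := by simpa only [h] using h1a y c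
  have hll : Q.ll (Q.lr c y) c = c := by simpa only [h] using h1b y c
  obtain ⟨z, hz, hzc⟩ := h4b c
  have hlr : Q.lr c y = z := hinj (hll.trans hzc)
  calc Q.lr c y = z := hlr
    _ = Q.ul c z := hz
    _ = y := hlr ▸ hul

theorem ul_eq_of_ll_eq (hQ : IsBiquandle Q) {y c : B} (h : Q.ll y c = c) : Q.ul c y = y := by
  have hinj := Finite.injective_iff_surjective.mpr (hQ.ur_right_surjective c)
  obtain ⟨-, -, h1c, h1d, -, -, -, -, -, -, -, -, h4a, -⟩ := hQ
  have hur : Q.ur (Q.ul c y) c = c := by simpa only [h] using h1c c y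
  have hlr : Q.lr c (Q.ul c y) = y := by simpa only [h] using h1d c y
  obtain ⟨z, hz, hzc⟩ := h4a c
  have hul : Q.ul c y = z := hinj (hur.trans hzc)
  calc Q.ul c y = z := hul
    _ = Q.lr c z := hz
    _ = y := hul ▸ hlr

end IsBiquandle

/-- In a finite biquandle, every row of each of the four submatrices of the biquandle
matrix has exactly one entry equal to its column number. -/
theorem finite_biquandle_unique_column_fixed {B : Type*} [Finite B]
    (Q : BiquandleOps B) (hQ : IsBiquandle Q) :
    ∀ a : B, (∃! x, Q.ur a x = x) ∧ (∃! x, Q.ul a x = x) ∧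
      (∃! x, Q.lr a x = x) ∧ (∃! x, Q.ll a x = x) := by
  intro a
  obtain ⟨hur, hlr⟩ := existsUnique_op_eq_self_of_imp hQ.ur_right_surjective
    hQ.lr_right_surjective (fun _ _ => hQ.lr_eq_of_ur_eq) a
  obtain ⟨hll, hul⟩ := existsUnique_op_eq_self_of_imp hQ.ll_right_surjective
    hQ.ul_right_surjective (fun _ _ => hQ.ul_eq_of_ll_eq) a
  exact ⟨hur, hul, hlr, hll⟩
end

section
/- Let Q be a quandle with operation ▷ and inverse operation ▷⁻¹, and let B(Q) be the associated biquandle with operations a^b := a ▷ b, a^{b̄} := a ▷⁻¹ b, a_b := a, a_{b̄} := a. Then B(Q) is self-flip, i.e. there exists a biquandle isomorphism from B(Q) to Flip(B(Q)), if and only if Q is trivial, i.e. a ▷ b = a for all a,b ∈ Q. -/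
theorem ur_eq_left_of_isBiquandleHom_flip {B T : Type*} {R : BiquandleOps B}
    {S : BiquandleOps T} {φ : B → T} (hφ : Function.Injective φ)
    (hom : IsBiquandleHom R (Flip S) φ) (hS : ∀ a b, S.lr a b = a) (a b : B) :
    R.ur a b = a :=
  hφ <| (hom.1 a b).trans (hS (φ a) (φ b))

theorem isBiquandleHom_id_flip {B : Type*} {R : BiquandleOps B}
    (hur : ∀ a b, R.ur a b = R.lr a b) (hul : ∀ a b, R.ul a b = R.ll a b) :
    IsBiquandleHom R (Flip R) id :=
  ⟨hur, hul, fun a b => (hur a b).symm, fun a b => (hul a b).symm⟩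

theorem quandle_biquandle_selfFlip_iff_trivial_general {Q : Type*} (tr ti : Q → Q → Q)
    (hinv1 : ∀ a b, ti (tr a b) b = a) :
    (∃ φ : Q → Q, Function.Bijective φ ∧
      IsBiquandleHom (⟨tr, ti, fun a _ => a, fun a _ => a⟩ : BiquandleOps Q)
        (Flip ⟨tr, ti, fun a _ => a, fun a _ => a⟩) φ) ↔
    (∀ a b, tr a b = a) := by
  constructor
  · rintro ⟨φ, hbij, hom⟩
    exact ur_eq_left_of_isBiquandleHom_flip hbij.injective hom fun _ _ => rfl
  · intro htriv
    have hti : ∀ a b, ti a b = a := fun a b => by simpa only [htriv] using hinv1 a b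
    exact ⟨id, Function.bijective_id, isBiquandleHom_id_flip htriv hti⟩

/-- The biquandle associated to a quandle is self-flip iff the quandle is trivial. -/
theorem quandle_biquandle_selfFlip_iff_trivial {Q : Type*} (tr ti : Q → Q → Q)
    (hidem : ∀ a, tr a a = a)
    (hinv1 : ∀ a b, ti (tr a b) b = a)
    (hinv2 : ∀ a b, tr (ti a b) b = a)
    (hdist : ∀ a b c, tr (tr a b) c = tr (tr a c) (tr b c)) :
    (∃ φ : Q → Q, Function.Bijective φ ∧
      IsBiquandleHom (⟨tr, ti, fun a _ => a, fun a _ => a⟩ : BiquandleOps Q)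
        (Flip ⟨tr, ti, fun a _ => a, fun a _ => a⟩) φ) ↔
    (∀ a b, tr a b = a) :=
  quandle_biquandle_selfFlip_iff_trivial_general tr ti hinv1
end

section
/- Let Q be a quandle with operation ▷ and inverse operation ▷⁻¹, and let B(Q) be the associated biquandle with operations a^b := a ▷ b, a^{b̄} := a ▷⁻¹ b, a_b := a, a_{b̄} := a. Then B(Q) is self-obverse, i.e. there exists a biquandle isomorphism from B(Q) to Obv(B(Q)), if and only if Q is self-dual, i.e. there exists a bijection φ : Q → Q with φ(a ▷ b) = φ(a) ▷⁻¹ φ(b) for all a,b ∈ Q. -/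
/-! The lower operations of `B(Q)` are trivial and so are preserved by any map, and a map turning
`▷` into `▷⁻¹` automatically turns `▷⁻¹` into `▷`, because `▷⁻¹ b` inverts `▷ b`. So an isomorphism
`B(Q) → Obv(B(Q))` is exactly an isomorphism from `Q` to its dual. -/

def BiquandleOps.ofQuandle {Q : Type*} (tr ti : Q → Q → Q) : BiquandleOps Q :=
  ⟨tr, ti, fun a _ => a, fun a _ => a⟩

section

variable {Q R : Type*} {tr ti : Q → Q → Q} {tr' ti' : R → R → R}

theorem map_ti_eq_tr_of_map_tr_eq_ti (hQ : ∀ a b, tr (ti a b) b = a)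
    (hR : ∀ x y, tr' (ti' x y) y = x) {φ : Q → R}
    (hφ : ∀ a b, φ (tr a b) = ti' (φ a) (φ b)) (a b : Q) :
    φ (ti a b) = tr' (φ a) (φ b) := by
  calc φ (ti a b) = tr' (ti' (φ (ti a b)) (φ b)) (φ b) := (hR _ _).symm
    _ = tr' (φ a) (φ b) := by rw [← hφ, hQ]

theorem isBiquandleHom_ofQuandle_obv_iff (hQ : ∀ a b, tr (ti a b) b = a) (φ : Q → Q) :
    IsBiquandleHom (.ofQuandle tr ti) (Obv (.ofQuandle tr ti)) φ ↔
      ∀ a b, φ (tr a b) = ti (φ a) (φ b) :=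
  ⟨fun h => h.1, fun h => ⟨h, map_ti_eq_tr_of_map_tr_eq_ti hQ hQ h, fun _ _ => rfl, fun _ _ => rfl⟩⟩

end

theorem quandle_biquandle_selfObv_iff_selfDual_general {Q : Type*} (tr ti : Q → Q → Q)
    (hinv2 : ∀ a b, tr (ti a b) b = a) :
    (∃ φ : Q → Q, Function.Bijective φ ∧
      IsBiquandleHom (⟨tr, ti, fun a _ => a, fun a _ => a⟩ : BiquandleOps Q)
        (Obv ⟨tr, ti, fun a _ => a, fun a _ => a⟩) φ) ↔
    (∃ φ : Q → Q, Function.Bijective φ ∧ ∀ a b, φ (tr a b) = ti (φ a) (φ b)) :=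
  exists_congr fun φ => and_congr_right fun _ => isBiquandleHom_ofQuandle_obv_iff hinv2 φ

/-- The biquandle associated to a quandle is self-obverse iff the quandle is self-dual. -/
theorem quandle_biquandle_selfObv_iff_selfDual {Q : Type*} (tr ti : Q → Q → Q)
    (hidem : ∀ a, tr a a = a)
    (hinv1 : ∀ a b, ti (tr a b) b = a)
    (hinv2 : ∀ a b, tr (ti a b) b = a)
    (hdist : ∀ a b c, tr (tr a b) c = tr (tr a c) (tr b c)) :
    (∃ φ : Q → Q, Function.Bijective φ ∧
      IsBiquandleHom (⟨tr, ti, fun a _ => a, fun a _ => a⟩ : BiquandleOps Q)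
        (Obv ⟨tr, ti, fun a _ => a, fun a _ => a⟩) φ) ↔
    (∃ φ : Q → Q, Function.Bijective φ ∧ ∀ a b, φ (tr a b) = ti (φ a) (φ b)) :=
  quandle_biquandle_selfObv_iff_selfDual_general tr ti hinv2
end

section
/- Let B be a biquandle and define the map S̄ : B × B → B × B by S̄(a,b) = (b^{ā}, a_{b̄}). Then S̄ satisfies the set-theoretic Yang–Baxter equation: (S̄ × Id) ∘ (Id × S̄) ∘ (S̄ × Id) = (Id × S̄) ∘ (S̄ × Id) ∘ (Id × S̄) as maps B × B × B → B × B × B. -/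
/-- The switch map `S(a,b) = (b_a, a^b)`. -/
def switchMap {B : Type*} (Q : BiquandleOps B) : B × B → B × B :=
  fun p => (Q.lr p.2 p.1, Q.ur p.1 p.2)

/-- The map `S̄(a,b) = (b^{ā}, a_{b̄})`. -/
def coswitchMap {B : Type*} (Q : BiquandleOps B) : B × B → B × B :=
  fun p => (Q.ul p.2 p.1, Q.ll p.1 p.2)

/-- Apply a map `B × B → B × B` to the first two coordinates of `B × B × B`. -/
def sTimesId {B : Type*} (S : B × B → B × B) : B × B × B → B × B × B :=
  fun p => ((S (p.1, p.2.1)).1, (S (p.1, p.2.1)).2, p.2.2)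

/-- Apply a map `B × B → B × B` to the last two coordinates of `B × B × B`. -/
def idTimesS {B : Type*} (S : B × B → B × B) : B × B × B → B × B × B :=
  fun p => (p.1, S p.2)

/-! Evaluated at `(c, b, a)`, the three coordinates of the braid relation for `S̄` are precisely
the three identities of axiom (3) in the operations `a^{b̄}` and `a_{b̄}`. -/

theorem coswitchMap_yangBaxter_iff {B : Type*} (Q : BiquandleOps B) :
    (sTimesId (coswitchMap Q)) ∘ (idTimesS (coswitchMap Q)) ∘ (sTimesId (coswitchMap Q)) =
      (idTimesS (coswitchMap Q)) ∘ (sTimesId (coswitchMap Q)) ∘ (idTimesS (coswitchMap Q)) ↔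
    (∀ a b c, Q.ul (Q.ul a b) c = Q.ul (Q.ul a (Q.ll c b)) (Q.ul b c)) ∧
    (∀ a b c, Q.ll (Q.ll c b) a = Q.ll (Q.ll c (Q.ul a b)) (Q.ll b a)) ∧
    (∀ a b c, Q.ul (Q.ll b a) (Q.ll c (Q.ul a b)) = Q.ll (Q.ul b c) (Q.ul a (Q.ll c b))) := by
  simp only [funext_iff, Prod.forall, Function.comp_apply, sTimesId, idTimesS, coswitchMap,
    Prod.mk.injEq]
  constructor
  · intro h
    exact ⟨fun a b c ↦ ((h c b a).1).symm, fun a b c ↦ (h c b a).2.2,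
      fun a b c ↦ ((h c b a).2.1).symm⟩
  · rintro ⟨h_ul_ul, h_ll_ll, h_ul_ll⟩ a b c
    exact ⟨(h_ul_ul c b a).symm, (h_ul_ll c b a).symm, h_ll_ll c b a⟩

/-- The map `S̄(a,b) = (b^{ā}, a_{b̄})` of a biquandle satisfies the set-theoretic
Yang–Baxter equation. -/
theorem coswitch_yangBaxter {B : Type*} (Q : BiquandleOps B) (hQ : IsBiquandle Q) :
    (sTimesId (coswitchMap Q)) ∘ (idTimesS (coswitchMap Q)) ∘ (sTimesId (coswitchMap Q)) =
    (idTimesS (coswitchMap Q)) ∘ (sTimesId (coswitchMap Q)) ∘ (idTimesS (coswitchMap Q)) := by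
  obtain ⟨-, -, -, -, -, -, -, -, -, h_ul_ul, h_ll_ll, h_ul_ll, -, -⟩ := hQ
  exact (coswitchMap_yangBaxter_iff Q).mpr ⟨h_ul_ul, h_ll_ll, h_ul_ll⟩
end

section
/- The 36 biquandle structures on a 3-element set comprise exactly 15 isomorphism classes; that is, the quotient of the set of biquandle structures on Fin 3 by the equivalence relation of biquandle isomorphism has cardinality 15. -/
section BiquandleAux

/-- The six permutations of `Fin 3`, tabulated. -/
def pt : Fin 6 → Fin 3 → Fin 3
  | 0, 0 => 0
  | 0, 1 => 1
  | 0, 2 => 2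
  | 1, 0 => 0
  | 1, 1 => 2
  | 1, 2 => 1
  | 2, 0 => 1
  | 2, 1 => 0
  | 2, 2 => 2
  | 3, 0 => 1
  | 3, 1 => 2
  | 3, 2 => 0
  | 4, 0 => 2
  | 4, 1 => 0
  | 4, 2 => 1
  | 5, 0 => 2
  | 5, 1 => 1
  | 5, 2 => 0

def colF (x y z : Fin 6) : Fin 3 → Fin 6
  | 0 => x
  | 1 => y
  | 2 => z

/-- The operation table whose columns are the permutations `pt x`, `pt y`, `pt z`. -/
def tb (x y z : Fin 6) (a b : Fin 3) : Fin 3 := pt (colF x y z b) a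

abbrev UrlrAx (ur lr : Fin 3 → Fin 3 → Fin 3) : Prop :=
  (∀ a b c, ur (ur a b) c = ur (ur a (lr c b)) (ur b c)) ∧
  (∀ a b c, lr (lr c b) a = lr (lr c (ur a b)) (lr b a)) ∧
  (∀ a b c, ur (lr b a) (lr c (ur a b)) = lr (ur b c) (ur a (lr c b))) ∧
  (∀ a, ∃ x, x = lr a x ∧ a = ur x a) ∧
  (∀ a b a' b', ur a b = ur a' b' → lr b a = lr b' a' → a = a' ∧ b = b')

abbrev Tup12 := Fin 6 × Fin 6 × Fin 6 × Fin 6 × Fin 6 × Fin 6 ×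
  Fin 6 × Fin 6 × Fin 6 × Fin 6 × Fin 6 × Fin 6

/-- The 36 biquandle structures, encoded as column-permutation indices
(ur-columns, lr-columns, ul-columns, ll-columns). -/
def tupF0 : Nat → Tup12
  | 0 => (0, 0, 0, 0, 0, 0, 0, 0, 0, 0, 0, 0)
  | 1 => (0, 0, 0, 0, 0, 2, 0, 0, 0, 0, 0, 2)
  | 2 => (0, 0, 0, 0, 5, 0, 0, 0, 0, 0, 5, 0)
  | 3 => (0, 0, 0, 1, 0, 0, 0, 0, 0, 1, 0, 0)
  | 4 => (0, 0, 0, 1, 5, 2, 0, 0, 0, 1, 5, 2)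
  | 5 => (0, 0, 2, 0, 0, 0, 0, 0, 2, 0, 0, 0)
  | 6 => (0, 0, 2, 0, 0, 2, 0, 0, 2, 0, 0, 2)
  | 7 => (0, 1, 1, 0, 1, 1, 0, 1, 1, 0, 1, 1)
  | 8 => (0, 1, 1, 1, 1, 1, 0, 1, 1, 1, 1, 1)
  | 9 => (0, 4, 3, 1, 1, 1, 0, 4, 3, 1, 1, 1)
  | 10 => (0, 5, 0, 0, 0, 0, 0, 5, 0, 0, 0, 0)
  | 11 => (0, 5, 0, 0, 5, 0, 0, 5, 0, 0, 5, 0)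
  | 12 => (1, 0, 0, 0, 0, 0, 1, 0, 0, 0, 0, 0)
  | 13 => (1, 0, 0, 1, 0, 0, 1, 0, 0, 1, 0, 0)
  | 14 => (1, 1, 1, 0, 1, 1, 1, 1, 1, 0, 1, 1)
  | 15 => (1, 1, 1, 0, 4, 3, 1, 1, 1, 0, 4, 3)
  | 16 => (1, 1, 1, 1, 1, 1, 1, 1, 1, 1, 1, 1)
  | 17 => (1, 5, 2, 0, 0, 0, 1, 5, 2, 0, 0, 0)
  | 18 => (2, 1, 5, 3, 3, 3, 5, 2, 1, 4, 4, 4)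
  | 19 => (2, 2, 0, 2, 2, 0, 2, 2, 0, 2, 2, 0)
  | 20 => (2, 2, 0, 2, 2, 2, 2, 2, 0, 2, 2, 2)
  | 21 => (2, 2, 2, 2, 2, 0, 2, 2, 2, 2, 2, 0)
  | 22 => (2, 2, 2, 2, 2, 2, 2, 2, 2, 2, 2, 2)
  | 23 => (2, 2, 2, 4, 3, 0, 2, 2, 2, 4, 3, 0)
  | 24 => (3, 0, 4, 5, 5, 5, 3, 0, 4, 5, 5, 5)
  | 25 => (3, 3, 3, 2, 1, 5, 4, 4, 4, 5, 2, 1)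
  | 26 => (3, 3, 3, 4, 4, 4, 4, 4, 4, 3, 3, 3)
  | 27 => (4, 3, 0, 2, 2, 2, 4, 3, 0, 2, 2, 2)
  | 28 => (4, 4, 4, 3, 3, 3, 3, 3, 3, 4, 4, 4)
  | 29 => (4, 4, 4, 5, 2, 1, 3, 3, 3, 2, 1, 5)
  | 30 => (5, 0, 5, 5, 0, 5, 5, 0, 5, 5, 0, 5)
  | 31 => (5, 0, 5, 5, 5, 5, 5, 0, 5, 5, 5, 5)
  | 32 => (5, 2, 1, 4, 4, 4, 2, 1, 5, 3, 3, 3)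
  | 33 => (5, 5, 5, 3, 0, 4, 5, 5, 5, 3, 0, 4)
  | 34 => (5, 5, 5, 5, 0, 5, 5, 5, 5, 5, 0, 5)
  | 35 => (5, 5, 5, 5, 5, 5, 5, 5, 5, 5, 5, 5)
  | _ => (0, 0, 0, 0, 0, 0, 0, 0, 0, 0, 0, 0)

def tupF (i : Fin 36) : Tup12 := tupF0 i.val

/-- Isomorphism-class index of each of the 36 biquandles. -/
def cls0 : Nat → Fin 15
  | 0 => 0
  | 1 => 1
  | 2 => 1
  | 3 => 1
  | 4 => 2
  | 5 => 3
  | 6 => 4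
  | 7 => 5
  | 8 => 6
  | 9 => 7
  | 10 => 3
  | 11 => 4
  | 12 => 3
  | 13 => 4
  | 14 => 8
  | 15 => 9
  | 16 => 10
  | 17 => 11
  | 18 => 12
  | 19 => 5
  | 20 => 6
  | 21 => 8
  | 22 => 10
  | 23 => 9
  | 24 => 7
  | 25 => 13
  | 26 => 14
  | 27 => 7
  | 28 => 14
  | 29 => 13
  | 30 => 5
  | 31 => 6
  | 32 => 12
  | 33 => 9
  | 34 => 8
  | 35 => 10
  | _ => 0

def cls (i : Fin 36) : Fin 15 := cls0 i.val

def mk12 : Tup12 → BiquandleOps (Fin 3)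
  | (c0, c1, c2, d0, d1, d2, e0, e1, e2, f0, f1, f2) =>
    ⟨tb c0 c1 c2, tb e0 e1 e2, tb d0 d1 d2, tb f0 f1 f2⟩

def LopsF (i : Fin 36) : BiquandleOps (Fin 3) := mk12 (tupF i)

instance : DecidableEq (BiquandleOps (Fin 3)) := fun Q R =>
  decidable_of_iff (Q.ur = R.ur ∧ Q.ul = R.ul ∧ Q.lr = R.lr ∧ Q.ll = R.ll)
    (by cases Q; cases R; simp)

theorem perm_complete : ∀ f : Fin 3 → Fin 3, Function.Surjective f →
    ∃ i : Fin 6, ∀ a, f a = pt i a := by decide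

def tup6F0 : Nat → Fin 6 × Fin 6 × Fin 6 × Fin 6 × Fin 6 × Fin 6
  | 0 => (0, 0, 0, 0, 0, 0)
  | 1 => (0, 0, 0, 0, 0, 2)
  | 2 => (0, 0, 0, 0, 5, 0)
  | 3 => (0, 0, 0, 1, 0, 0)
  | 4 => (0, 0, 0, 1, 5, 2)
  | 5 => (0, 0, 2, 0, 0, 0)
  | 6 => (0, 0, 2, 0, 0, 2)
  | 7 => (0, 1, 1, 0, 1, 1)
  | 8 => (0, 1, 1, 1, 1, 1)
  | 9 => (0, 4, 3, 1, 1, 1)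
  | 10 => (0, 5, 0, 0, 0, 0)
  | 11 => (0, 5, 0, 0, 5, 0)
  | 12 => (1, 0, 0, 0, 0, 0)
  | 13 => (1, 0, 0, 1, 0, 0)
  | 14 => (1, 1, 1, 0, 1, 1)
  | 15 => (1, 1, 1, 0, 4, 3)
  | 16 => (1, 1, 1, 1, 1, 1)
  | 17 => (1, 5, 2, 0, 0, 0)
  | 18 => (2, 1, 5, 3, 3, 3)
  | 19 => (2, 2, 0, 2, 2, 0)
  | 20 => (2, 2, 0, 2, 2, 2)
  | 21 => (2, 2, 2, 2, 2, 0)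
  | 22 => (2, 2, 2, 2, 2, 2)
  | 23 => (2, 2, 2, 4, 3, 0)
  | 24 => (3, 0, 4, 5, 5, 5)
  | 25 => (3, 3, 3, 2, 1, 5)
  | 26 => (3, 3, 3, 4, 4, 4)
  | 27 => (4, 3, 0, 2, 2, 2)
  | 28 => (4, 4, 4, 3, 3, 3)
  | 29 => (4, 4, 4, 5, 2, 1)
  | 30 => (5, 0, 5, 5, 0, 5)
  | 31 => (5, 0, 5, 5, 5, 5)
  | 32 => (5, 2, 1, 4, 4, 4)
  | 33 => (5, 5, 5, 3, 0, 4)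
  | 34 => (5, 5, 5, 5, 0, 5)
  | 35 => (5, 5, 5, 5, 5, 5)
  | _ => (0, 0, 0, 0, 0, 0)

set_option synthInstance.maxHeartbeats 2000000 in
set_option synthInstance.maxSize 4000 in
set_option maxRecDepth 8000 in
set_option maxHeartbeats 400000000 in
theorem cA00 : ∀ c2 d0 d1 d2 : Fin 6,
    UrlrAx (tb 0 0 c2) (tb d0 d1 d2) →
    ∃ i : Fin 36, ((0:Fin 6), (0:Fin 6), c2, d0, d1, d2) = tup6F0 i.val := by
  decide

set_option synthInstance.maxHeartbeats 2000000 in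
set_option synthInstance.maxSize 4000 in
set_option maxRecDepth 8000 in
set_option maxHeartbeats 400000000 in
theorem cA01 : ∀ c2 d0 d1 d2 : Fin 6,
    UrlrAx (tb 0 1 c2) (tb d0 d1 d2) →
    ∃ i : Fin 36, ((0:Fin 6), (1:Fin 6), c2, d0, d1, d2) = tup6F0 i.val := by
  decide

set_option synthInstance.maxHeartbeats 2000000 in
set_option synthInstance.maxSize 4000 in
set_option maxRecDepth 8000 in
set_option maxHeartbeats 400000000 in
theorem cA02 : ∀ c2 d0 d1 d2 : Fin 6,
    UrlrAx (tb 0 2 c2) (tb d0 d1 d2) →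
    ∃ i : Fin 36, ((0:Fin 6), (2:Fin 6), c2, d0, d1, d2) = tup6F0 i.val := by
  decide

set_option synthInstance.maxHeartbeats 2000000 in
set_option synthInstance.maxSize 4000 in
set_option maxRecDepth 8000 in
set_option maxHeartbeats 400000000 in
theorem cA03 : ∀ c2 d0 d1 d2 : Fin 6,
    UrlrAx (tb 0 3 c2) (tb d0 d1 d2) →
    ∃ i : Fin 36, ((0:Fin 6), (3:Fin 6), c2, d0, d1, d2) = tup6F0 i.val := by
  decide

set_option synthInstance.maxHeartbeats 2000000 in
set_option synthInstance.maxSize 4000 in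
set_option maxRecDepth 8000 in
set_option maxHeartbeats 400000000 in
theorem cA04 : ∀ c2 d0 d1 d2 : Fin 6,
    UrlrAx (tb 0 4 c2) (tb d0 d1 d2) →
    ∃ i : Fin 36, ((0:Fin 6), (4:Fin 6), c2, d0, d1, d2) = tup6F0 i.val := by
  decide

set_option synthInstance.maxHeartbeats 2000000 in
set_option synthInstance.maxSize 4000 in
set_option maxRecDepth 8000 in
set_option maxHeartbeats 400000000 in
theorem cA05 : ∀ c2 d0 d1 d2 : Fin 6,
    UrlrAx (tb 0 5 c2) (tb d0 d1 d2) →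
    ∃ i : Fin 36, ((0:Fin 6), (5:Fin 6), c2, d0, d1, d2) = tup6F0 i.val := by
  decide

set_option synthInstance.maxHeartbeats 2000000 in
set_option synthInstance.maxSize 4000 in
set_option maxRecDepth 8000 in
set_option maxHeartbeats 400000000 in
theorem cA10 : ∀ c2 d0 d1 d2 : Fin 6,
    UrlrAx (tb 1 0 c2) (tb d0 d1 d2) →
    ∃ i : Fin 36, ((1:Fin 6), (0:Fin 6), c2, d0, d1, d2) = tup6F0 i.val := by
  decide

set_option synthInstance.maxHeartbeats 2000000 in
set_option synthInstance.maxSize 4000 in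
set_option maxRecDepth 8000 in
set_option maxHeartbeats 400000000 in
theorem cA11 : ∀ c2 d0 d1 d2 : Fin 6,
    UrlrAx (tb 1 1 c2) (tb d0 d1 d2) →
    ∃ i : Fin 36, ((1:Fin 6), (1:Fin 6), c2, d0, d1, d2) = tup6F0 i.val := by
  decide

set_option synthInstance.maxHeartbeats 2000000 in
set_option synthInstance.maxSize 4000 in
set_option maxRecDepth 8000 in
set_option maxHeartbeats 400000000 in
theorem cA12 : ∀ c2 d0 d1 d2 : Fin 6,
    UrlrAx (tb 1 2 c2) (tb d0 d1 d2) →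
    ∃ i : Fin 36, ((1:Fin 6), (2:Fin 6), c2, d0, d1, d2) = tup6F0 i.val := by
  decide

set_option synthInstance.maxHeartbeats 2000000 in
set_option synthInstance.maxSize 4000 in
set_option maxRecDepth 8000 in
set_option maxHeartbeats 400000000 in
theorem cA13 : ∀ c2 d0 d1 d2 : Fin 6,
    UrlrAx (tb 1 3 c2) (tb d0 d1 d2) →
    ∃ i : Fin 36, ((1:Fin 6), (3:Fin 6), c2, d0, d1, d2) = tup6F0 i.val := by
  decide

set_option synthInstance.maxHeartbeats 2000000 in
set_option synthInstance.maxSize 4000 in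
set_option maxRecDepth 8000 in
set_option maxHeartbeats 400000000 in
theorem cA14 : ∀ c2 d0 d1 d2 : Fin 6,
    UrlrAx (tb 1 4 c2) (tb d0 d1 d2) →
    ∃ i : Fin 36, ((1:Fin 6), (4:Fin 6), c2, d0, d1, d2) = tup6F0 i.val := by
  decide

set_option synthInstance.maxHeartbeats 2000000 in
set_option synthInstance.maxSize 4000 in
set_option maxRecDepth 8000 in
set_option maxHeartbeats 400000000 in
theorem cA15 : ∀ c2 d0 d1 d2 : Fin 6,
    UrlrAx (tb 1 5 c2) (tb d0 d1 d2) →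
    ∃ i : Fin 36, ((1:Fin 6), (5:Fin 6), c2, d0, d1, d2) = tup6F0 i.val := by
  decide

set_option synthInstance.maxHeartbeats 2000000 in
set_option synthInstance.maxSize 4000 in
set_option maxRecDepth 8000 in
set_option maxHeartbeats 400000000 in
theorem cA20 : ∀ c2 d0 d1 d2 : Fin 6,
    UrlrAx (tb 2 0 c2) (tb d0 d1 d2) →
    ∃ i : Fin 36, ((2:Fin 6), (0:Fin 6), c2, d0, d1, d2) = tup6F0 i.val := by
  decide

set_option synthInstance.maxHeartbeats 2000000 in
set_option synthInstance.maxSize 4000 in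
set_option maxRecDepth 8000 in
set_option maxHeartbeats 400000000 in
theorem cA21 : ∀ c2 d0 d1 d2 : Fin 6,
    UrlrAx (tb 2 1 c2) (tb d0 d1 d2) →
    ∃ i : Fin 36, ((2:Fin 6), (1:Fin 6), c2, d0, d1, d2) = tup6F0 i.val := by
  decide

set_option synthInstance.maxHeartbeats 2000000 in
set_option synthInstance.maxSize 4000 in
set_option maxRecDepth 8000 in
set_option maxHeartbeats 400000000 in
theorem cA22 : ∀ c2 d0 d1 d2 : Fin 6,
    UrlrAx (tb 2 2 c2) (tb d0 d1 d2) →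
    ∃ i : Fin 36, ((2:Fin 6), (2:Fin 6), c2, d0, d1, d2) = tup6F0 i.val := by
  decide

set_option synthInstance.maxHeartbeats 2000000 in
set_option synthInstance.maxSize 4000 in
set_option maxRecDepth 8000 in
set_option maxHeartbeats 400000000 in
theorem cA23 : ∀ c2 d0 d1 d2 : Fin 6,
    UrlrAx (tb 2 3 c2) (tb d0 d1 d2) →
    ∃ i : Fin 36, ((2:Fin 6), (3:Fin 6), c2, d0, d1, d2) = tup6F0 i.val := by
  decide

set_option synthInstance.maxHeartbeats 2000000 in
set_option synthInstance.maxSize 4000 in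
set_option maxRecDepth 8000 in
set_option maxHeartbeats 400000000 in
theorem cA24 : ∀ c2 d0 d1 d2 : Fin 6,
    UrlrAx (tb 2 4 c2) (tb d0 d1 d2) →
    ∃ i : Fin 36, ((2:Fin 6), (4:Fin 6), c2, d0, d1, d2) = tup6F0 i.val := by
  decide

set_option synthInstance.maxHeartbeats 2000000 in
set_option synthInstance.maxSize 4000 in
set_option maxRecDepth 8000 in
set_option maxHeartbeats 400000000 in
theorem cA25 : ∀ c2 d0 d1 d2 : Fin 6,
    UrlrAx (tb 2 5 c2) (tb d0 d1 d2) →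
    ∃ i : Fin 36, ((2:Fin 6), (5:Fin 6), c2, d0, d1, d2) = tup6F0 i.val := by
  decide

set_option synthInstance.maxHeartbeats 2000000 in
set_option synthInstance.maxSize 4000 in
set_option maxRecDepth 8000 in
set_option maxHeartbeats 400000000 in
theorem cA30 : ∀ c2 d0 d1 d2 : Fin 6,
    UrlrAx (tb 3 0 c2) (tb d0 d1 d2) →
    ∃ i : Fin 36, ((3:Fin 6), (0:Fin 6), c2, d0, d1, d2) = tup6F0 i.val := by
  decide

set_option synthInstance.maxHeartbeats 2000000 in
set_option synthInstance.maxSize 4000 in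
set_option maxRecDepth 8000 in
set_option maxHeartbeats 400000000 in
theorem cA31 : ∀ c2 d0 d1 d2 : Fin 6,
    UrlrAx (tb 3 1 c2) (tb d0 d1 d2) →
    ∃ i : Fin 36, ((3:Fin 6), (1:Fin 6), c2, d0, d1, d2) = tup6F0 i.val := by
  decide

set_option synthInstance.maxHeartbeats 2000000 in
set_option synthInstance.maxSize 4000 in
set_option maxRecDepth 8000 in
set_option maxHeartbeats 400000000 in
theorem cA32 : ∀ c2 d0 d1 d2 : Fin 6,
    UrlrAx (tb 3 2 c2) (tb d0 d1 d2) →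
    ∃ i : Fin 36, ((3:Fin 6), (2:Fin 6), c2, d0, d1, d2) = tup6F0 i.val := by
  decide

set_option synthInstance.maxHeartbeats 2000000 in
set_option synthInstance.maxSize 4000 in
set_option maxRecDepth 8000 in
set_option maxHeartbeats 400000000 in
theorem cA33 : ∀ c2 d0 d1 d2 : Fin 6,
    UrlrAx (tb 3 3 c2) (tb d0 d1 d2) →
    ∃ i : Fin 36, ((3:Fin 6), (3:Fin 6), c2, d0, d1, d2) = tup6F0 i.val := by
  decide

set_option synthInstance.maxHeartbeats 2000000 in
set_option synthInstance.maxSize 4000 in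
set_option maxRecDepth 8000 in
set_option maxHeartbeats 400000000 in
theorem cA34 : ∀ c2 d0 d1 d2 : Fin 6,
    UrlrAx (tb 3 4 c2) (tb d0 d1 d2) →
    ∃ i : Fin 36, ((3:Fin 6), (4:Fin 6), c2, d0, d1, d2) = tup6F0 i.val := by
  decide

set_option synthInstance.maxHeartbeats 2000000 in
set_option synthInstance.maxSize 4000 in
set_option maxRecDepth 8000 in
set_option maxHeartbeats 400000000 in
theorem cA35 : ∀ c2 d0 d1 d2 : Fin 6,
    UrlrAx (tb 3 5 c2) (tb d0 d1 d2) →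
    ∃ i : Fin 36, ((3:Fin 6), (5:Fin 6), c2, d0, d1, d2) = tup6F0 i.val := by
  decide

set_option synthInstance.maxHeartbeats 2000000 in
set_option synthInstance.maxSize 4000 in
set_option maxRecDepth 8000 in
set_option maxHeartbeats 400000000 in
theorem cA40 : ∀ c2 d0 d1 d2 : Fin 6,
    UrlrAx (tb 4 0 c2) (tb d0 d1 d2) →
    ∃ i : Fin 36, ((4:Fin 6), (0:Fin 6), c2, d0, d1, d2) = tup6F0 i.val := by
  decide

set_option synthInstance.maxHeartbeats 2000000 in
set_option synthInstance.maxSize 4000 in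
set_option maxRecDepth 8000 in
set_option maxHeartbeats 400000000 in
theorem cA41 : ∀ c2 d0 d1 d2 : Fin 6,
    UrlrAx (tb 4 1 c2) (tb d0 d1 d2) →
    ∃ i : Fin 36, ((4:Fin 6), (1:Fin 6), c2, d0, d1, d2) = tup6F0 i.val := by
  decide

set_option synthInstance.maxHeartbeats 2000000 in
set_option synthInstance.maxSize 4000 in
set_option maxRecDepth 8000 in
set_option maxHeartbeats 400000000 in
theorem cA42 : ∀ c2 d0 d1 d2 : Fin 6,
    UrlrAx (tb 4 2 c2) (tb d0 d1 d2) →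
    ∃ i : Fin 36, ((4:Fin 6), (2:Fin 6), c2, d0, d1, d2) = tup6F0 i.val := by
  decide

set_option synthInstance.maxHeartbeats 2000000 in
set_option synthInstance.maxSize 4000 in
set_option maxRecDepth 8000 in
set_option maxHeartbeats 400000000 in
theorem cA43 : ∀ c2 d0 d1 d2 : Fin 6,
    UrlrAx (tb 4 3 c2) (tb d0 d1 d2) →
    ∃ i : Fin 36, ((4:Fin 6), (3:Fin 6), c2, d0, d1, d2) = tup6F0 i.val := by
  decide

set_option synthInstance.maxHeartbeats 2000000 in
set_option synthInstance.maxSize 4000 in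
set_option maxRecDepth 8000 in
set_option maxHeartbeats 400000000 in
theorem cA44 : ∀ c2 d0 d1 d2 : Fin 6,
    UrlrAx (tb 4 4 c2) (tb d0 d1 d2) →
    ∃ i : Fin 36, ((4:Fin 6), (4:Fin 6), c2, d0, d1, d2) = tup6F0 i.val := by
  decide

set_option synthInstance.maxHeartbeats 2000000 in
set_option synthInstance.maxSize 4000 in
set_option maxRecDepth 8000 in
set_option maxHeartbeats 400000000 in
theorem cA45 : ∀ c2 d0 d1 d2 : Fin 6,
    UrlrAx (tb 4 5 c2) (tb d0 d1 d2) →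
    ∃ i : Fin 36, ((4:Fin 6), (5:Fin 6), c2, d0, d1, d2) = tup6F0 i.val := by
  decide

set_option synthInstance.maxHeartbeats 2000000 in
set_option synthInstance.maxSize 4000 in
set_option maxRecDepth 8000 in
set_option maxHeartbeats 400000000 in
theorem cA50 : ∀ c2 d0 d1 d2 : Fin 6,
    UrlrAx (tb 5 0 c2) (tb d0 d1 d2) →
    ∃ i : Fin 36, ((5:Fin 6), (0:Fin 6), c2, d0, d1, d2) = tup6F0 i.val := by
  decide

set_option synthInstance.maxHeartbeats 2000000 in
set_option synthInstance.maxSize 4000 in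
set_option maxRecDepth 8000 in
set_option maxHeartbeats 400000000 in
theorem cA51 : ∀ c2 d0 d1 d2 : Fin 6,
    UrlrAx (tb 5 1 c2) (tb d0 d1 d2) →
    ∃ i : Fin 36, ((5:Fin 6), (1:Fin 6), c2, d0, d1, d2) = tup6F0 i.val := by
  decide

set_option synthInstance.maxHeartbeats 2000000 in
set_option synthInstance.maxSize 4000 in
set_option maxRecDepth 8000 in
set_option maxHeartbeats 400000000 in
theorem cA52 : ∀ c2 d0 d1 d2 : Fin 6,
    UrlrAx (tb 5 2 c2) (tb d0 d1 d2) →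
    ∃ i : Fin 36, ((5:Fin 6), (2:Fin 6), c2, d0, d1, d2) = tup6F0 i.val := by
  decide

set_option synthInstance.maxHeartbeats 2000000 in
set_option synthInstance.maxSize 4000 in
set_option maxRecDepth 8000 in
set_option maxHeartbeats 400000000 in
theorem cA53 : ∀ c2 d0 d1 d2 : Fin 6,
    UrlrAx (tb 5 3 c2) (tb d0 d1 d2) →
    ∃ i : Fin 36, ((5:Fin 6), (3:Fin 6), c2, d0, d1, d2) = tup6F0 i.val := by
  decide

set_option synthInstance.maxHeartbeats 2000000 in
set_option synthInstance.maxSize 4000 in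
set_option maxRecDepth 8000 in
set_option maxHeartbeats 400000000 in
theorem cA54 : ∀ c2 d0 d1 d2 : Fin 6,
    UrlrAx (tb 5 4 c2) (tb d0 d1 d2) →
    ∃ i : Fin 36, ((5:Fin 6), (4:Fin 6), c2, d0, d1, d2) = tup6F0 i.val := by
  decide

set_option synthInstance.maxHeartbeats 2000000 in
set_option synthInstance.maxSize 4000 in
set_option maxRecDepth 8000 in
set_option maxHeartbeats 400000000 in
theorem cA55 : ∀ c2 d0 d1 d2 : Fin 6,
    UrlrAx (tb 5 5 c2) (tb d0 d1 d2) →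
    ∃ i : Fin 36, ((5:Fin 6), (5:Fin 6), c2, d0, d1, d2) = tup6F0 i.val := by
  decide

theorem classifyA : ∀ c0 c1 c2 d0 d1 d2 : Fin 6,
    UrlrAx (tb c0 c1 c2) (tb d0 d1 d2) →
    ∃ i : Fin 36, (c0, c1, c2, d0, d1, d2) = tup6F0 i.val := by
  intro c0 c1
  fin_cases c0 <;> fin_cases c1
  exacts [cA00, cA01, cA02, cA03, cA04, cA05, cA10, cA11, cA12, cA13, cA14, cA15, cA20, cA21, cA22, cA23, cA24, cA25, cA30, cA31, cA32, cA33, cA34, cA35, cA40, cA41, cA42, cA43, cA44, cA45, cA50, cA51, cA52, cA53, cA54, cA55]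

set_option synthInstance.maxHeartbeats 2000000 in
set_option synthInstance.maxSize 4000 in
set_option maxRecDepth 8000 in
set_option maxHeartbeats 400000000 in
theorem classifyB : ∀ i : Fin 36, ∀ e0 e1 e2 : Fin 6,
    (∀ a b, tb e0 e1 e2 (tb (tup6F0 i.val).1 (tup6F0 i.val).2.1 (tup6F0 i.val).2.2.1 a b) (tb (tup6F0 i.val).2.2.2.1 (tup6F0 i.val).2.2.2.2.1 (tup6F0 i.val).2.2.2.2.2 b a) = a) →
    ∀ f0 f1 f2 : Fin 6,
    (∀ a b, tb f0 f1 f2 (tb (tup6F0 i.val).2.2.2.1 (tup6F0 i.val).2.2.2.2.1 (tup6F0 i.val).2.2.2.2.2 b a) (tb (tup6F0 i.val).1 (tup6F0 i.val).2.1 (tup6F0 i.val).2.2.1 a b) = b) →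
    ∃ j : Fin 36,
      ((tup6F0 i.val).1, (tup6F0 i.val).2.1, (tup6F0 i.val).2.2.1, (tup6F0 i.val).2.2.2.1, (tup6F0 i.val).2.2.2.2.1, (tup6F0 i.val).2.2.2.2.2,
        e0, e1, e2, f0, f1, f2) = tupF j := by
  decide

theorem classify : ∀ c0 c1 c2 d0 d1 d2 : Fin 6,
    UrlrAx (tb c0 c1 c2) (tb d0 d1 d2) →
    ∀ e0 e1 e2 : Fin 6,
      (∀ a b, tb e0 e1 e2 (tb c0 c1 c2 a b) (tb d0 d1 d2 b a) = a) →
    ∀ f0 f1 f2 : Fin 6,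
      (∀ a b, tb f0 f1 f2 (tb d0 d1 d2 b a) (tb c0 c1 c2 a b) = b) →
    ∃ i : Fin 36, (c0, c1, c2, d0, d1, d2, e0, e1, e2, f0, f1, f2) = tupF i := by
  intro c0 c1 c2 d0 d1 d2 hU e0 e1 e2 hA1 f0 f1 f2 hA2
  obtain ⟨i, hi⟩ := classifyA c0 c1 c2 d0 d1 d2 hU
  have p1 : c0 = (tup6F0 i.val).1 := congrArg Prod.fst hi
  have p2 : c1 = (tup6F0 i.val).2.1 := congrArg (fun t => t.2.1) hi
  have p3 : c2 = (tup6F0 i.val).2.2.1 := congrArg (fun t => t.2.2.1) hi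
  have p4 : d0 = (tup6F0 i.val).2.2.2.1 := congrArg (fun t => t.2.2.2.1) hi
  have p5 : d1 = (tup6F0 i.val).2.2.2.2.1 := congrArg (fun t => t.2.2.2.2.1) hi
  have p6 : d2 = (tup6F0 i.val).2.2.2.2.2 := congrArg (fun t => t.2.2.2.2.2) hi
  rw [p1, p2, p3, p4, p5, p6] at hA1 hA2
  obtain ⟨j, hj⟩ := classifyB i e0 e1 e2 hA1 f0 f1 f2 hA2
  refine ⟨j, ?_⟩
  rw [p1, p2, p3, p4, p5, p6]
  exact hj

theorem LopsF_inj : ∀ i j : Fin 36, LopsF i = LopsF j → i = j := by decide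

set_option maxHeartbeats 2000000 in
theorem all_biq : ∀ i : Fin 36, IsBiquandle (LopsF i) := by
  unfold IsBiquandle; decide

def colG (x y z : Fin 3) : Fin 3 → Fin 3
  | 0 => x
  | 1 => y
  | 2 => z

abbrev Riso (Q R : BiquandleOps (Fin 3)) : Prop :=
  ∃ p0 p1 p2 : Fin 3, Function.Bijective (colG p0 p1 p2) ∧
    (∀ a b, colG p0 p1 p2 (Q.ur a b) = R.ur (colG p0 p1 p2 a) (colG p0 p1 p2 b)) ∧
    (∀ a b, colG p0 p1 p2 (Q.ul a b) = R.ul (colG p0 p1 p2 a) (colG p0 p1 p2 b)) ∧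
    (∀ a b, colG p0 p1 p2 (Q.lr a b) = R.lr (colG p0 p1 p2 a) (colG p0 p1 p2 b)) ∧
    (∀ a b, colG p0 p1 p2 (Q.ll a b) = R.ll (colG p0 p1 p2 a) (colG p0 p1 p2 b))

theorem colG_eta (φ : Fin 3 → Fin 3) : colG (φ 0) (φ 1) (φ 2) = φ := by
  funext x; fin_cases x <;> rfl

theorem riso_iff (Q R : BiquandleOps (Fin 3)) :
    (∃ φ : Fin 3 → Fin 3, Function.Bijective φ ∧ IsBiquandleHom Q R φ) ↔ Riso Q R := by
  constructor
  · rintro ⟨φ, hb, hom⟩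
    have hom' : (∀ a b, φ (Q.ur a b) = R.ur (φ a) (φ b)) ∧
        (∀ a b, φ (Q.ul a b) = R.ul (φ a) (φ b)) ∧
        (∀ a b, φ (Q.lr a b) = R.lr (φ a) (φ b)) ∧
        (∀ a b, φ (Q.ll a b) = R.ll (φ a) (φ b)) := hom
    refine ⟨φ 0, φ 1, φ 2, ?_⟩
    rw [colG_eta φ]
    exact ⟨hb, hom'.1, hom'.2.1, hom'.2.2.1, hom'.2.2.2⟩
  · rintro ⟨p0, p1, p2, hb, h1, h2, h3, h4⟩
    exact ⟨colG p0 p1 p2, hb, h1, h2, h3, h4⟩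

set_option maxHeartbeats 8000000 in
theorem cls_const : ∀ i j : Fin 36, Riso (LopsF i) (LopsF j) → cls i = cls j := by decide

set_option maxHeartbeats 8000000 in
theorem cls_inj : ∀ i j : Fin 36, cls i = cls j → Riso (LopsF i) (LopsF j) := by decide

theorem cls_surj : ∀ k : Fin 15, ∃ i : Fin 36, cls i = k := by decide

noncomputable def clsOps (Q : BiquandleOps (Fin 3)) : Fin 15 :=
  if h : ∃ i : Fin 36, LopsF i = Q then cls h.choose else 0

theorem clsOps_eq (i : Fin 36) : clsOps (LopsF i) = cls i := by
  have h : ∃ j : Fin 36, LopsF j = LopsF i := ⟨i, rfl⟩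
  unfold clsOps
  rw [dif_pos h]
  exact congrArg cls (LopsF_inj _ _ h.choose_spec)

theorem biq_mem (Q : BiquandleOps (Fin 3)) (h : IsBiquandle Q) :
    ∃ i : Fin 36, Q = LopsF i := by
  unfold IsBiquandle at h
  obtain ⟨h1, h2, h3, h4, h5, h6, h7, h8, h9, h10, h11, h12, h13, h14⟩ := h
  have sur : ∀ b, Function.Surjective (fun a => Q.ur a b) := by
    intro b a; obtain ⟨y, _, hy, _⟩ := h6 a b; exact ⟨y, hy.symm⟩
  have slr : ∀ a, Function.Surjective (fun z => Q.lr z a) := by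
    intro a b; obtain ⟨x, _, _, hx⟩ := h5 a b; exact ⟨Q.ll b x, hx.symm⟩
  have sul : ∀ b, Function.Surjective (fun x => Q.ul x b) := by
    intro b a; obtain ⟨x, _, hx, _⟩ := h5 a b; exact ⟨x, hx.symm⟩
  have sll : ∀ a, Function.Surjective (fun z => Q.ll z a) := by
    intro a b; obtain ⟨y, _, _, hy⟩ := h6 a b; exact ⟨Q.lr b y, hy.symm⟩
  obtain ⟨c0, hc0⟩ := perm_complete _ (sur 0)
  obtain ⟨c1, hc1⟩ := perm_complete _ (sur 1)
  obtain ⟨c2, hc2⟩ := perm_complete _ (sur 2)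
  obtain ⟨d0, hd0⟩ := perm_complete _ (slr 0)
  obtain ⟨d1, hd1⟩ := perm_complete _ (slr 1)
  obtain ⟨d2, hd2⟩ := perm_complete _ (slr 2)
  obtain ⟨e0, he0⟩ := perm_complete _ (sul 0)
  obtain ⟨e1, he1⟩ := perm_complete _ (sul 1)
  obtain ⟨e2, he2⟩ := perm_complete _ (sul 2)
  obtain ⟨f0, hf0⟩ := perm_complete _ (sll 0)
  obtain ⟨f1, hf1⟩ := perm_complete _ (sll 1)
  obtain ⟨f2, hf2⟩ := perm_complete _ (sll 2)
  have hur : Q.ur = tb c0 c1 c2 := by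
    funext a b; fin_cases b
    · exact hc0 a
    · exact hc1 a
    · exact hc2 a
  have hlr : Q.lr = tb d0 d1 d2 := by
    funext a b; fin_cases b
    · exact hd0 a
    · exact hd1 a
    · exact hd2 a
  have hul : Q.ul = tb e0 e1 e2 := by
    funext a b; fin_cases b
    · exact he0 a
    · exact he1 a
    · exact he2 a
  have hll : Q.ll = tb f0 f1 f2 := by
    funext a b; fin_cases b
    · exact hf0 a
    · exact hf1 a
    · exact hf2 a
  have hU : UrlrAx (tb c0 c1 c2) (tb d0 d1 d2) := by
    rw [← hur, ← hlr]
    refine ⟨h7, h8, h9, h13, ?_⟩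
    intro a b a' b' hx hy
    constructor
    · rw [← h1 a b, hx, hy, h1 a' b']
    · rw [← h2 a b, hx, hy, h2 a' b']
  have hA1 : ∀ a b, tb e0 e1 e2 (tb c0 c1 c2 a b) (tb d0 d1 d2 b a) = a := by
    rw [← hur, ← hlr, ← hul]; exact h1
  have hA2 : ∀ a b, tb f0 f1 f2 (tb d0 d1 d2 b a) (tb c0 c1 c2 a b) = b := by
    rw [← hur, ← hlr, ← hll]; exact h2
  obtain ⟨i, hi⟩ := classify c0 c1 c2 d0 d1 d2 hU e0 e1 e2 hA1 f0 f1 f2 hA2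
  refine ⟨i, ?_⟩
  have hQ : Q = (⟨tb c0 c1 c2, tb e0 e1 e2, tb d0 d1 d2, tb f0 f1 f2⟩ :
      BiquandleOps (Fin 3)) := by
    rw [← hur, ← hul, ← hlr, ← hll]
  refine hQ.trans ?_
  show _ = mk12 (tupF i)
  rw [← hi]
  rfl

end BiquandleAux

/-- The 36 biquandle structures on a 3-element set comprise exactly 15 isomorphism
classes. -/
theorem card_biquandles_three_up_to_iso :
    Nat.card (Quot (fun Q Q' : {Q : BiquandleOps (Fin 3) // IsBiquandle Q} =>
      ∃ φ : Fin 3 → Fin 3, Function.Bijective φ ∧ IsBiquandleHom Q.1 Q'.1 φ)) = 15 := by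
  
  classical
  set r := fun Q Q' : {Q : BiquandleOps (Fin 3) // IsBiquandle Q} =>
      ∃ φ : Fin 3 → Fin 3, Function.Bijective φ ∧ IsBiquandleHom Q.1 Q'.1 φ with hr
  have hwd : ∀ Q Q', r Q Q' → clsOps Q.1 = clsOps Q'.1 := by
    intro Q Q' h
    obtain ⟨i, hi⟩ := biq_mem Q.1 Q.2
    obtain ⟨j, hj⟩ := biq_mem Q'.1 Q'.2
    have h2 : ∃ φ : Fin 3 → Fin 3, Function.Bijective φ ∧ IsBiquandleHom Q.1 Q'.1 φ := h
    rw [hi, hj] at h2 ⊢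
    rw [clsOps_eq, clsOps_eq]
    exact cls_const i j ((riso_iff _ _).mp h2)
  let g : Quot r → Fin 15 := Quot.lift (fun Q => clsOps Q.1) hwd
  have hginj : Function.Injective g := by
    intro x y
    induction x using Quot.ind with | _ Q =>
    induction y using Quot.ind with | _ Q' =>
    intro h
    obtain ⟨i, hi⟩ := biq_mem Q.1 Q.2
    obtain ⟨j, hj⟩ := biq_mem Q'.1 Q'.2
    have h' : clsOps Q.1 = clsOps Q'.1 := h
    rw [hi, hj, clsOps_eq, clsOps_eq] at h'
    apply Quot.sound
    show ∃ φ : Fin 3 → Fin 3, Function.Bijective φ ∧ IsBiquandleHom Q.1 Q'.1 φ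
    rw [hi, hj]
    exact (riso_iff _ _).mpr (cls_inj i j h')
  have hgsurj : Function.Surjective g := by
    intro k
    obtain ⟨i, hik⟩ := cls_surj k
    refine ⟨Quot.mk r ⟨LopsF i, all_biq i⟩, ?_⟩
    show clsOps (LopsF i) = k
    rw [clsOps_eq]
    exact hik
  exact Nat.card_eq_of_equiv_fin (Equiv.ofBijective g ⟨hginj, hgsurj⟩)
end
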